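/- arXiv:1501.01790 — 10 statements merged into one kernel-verified Lean document; each statement's English description precedes it below -/
import Mathlib

section
/- Let (S, →) be a finite poset and ≺ a linear order extending →. Then the following are equivalent: (P2r) for any three distinct elements, if s1 → s2, s1 ≺ s3, and ¬(s1 → s3), then s2 ≺ s3 or s3 → s2; (P2l) for any three distinct elements, if s1 → s2, s3 ≺ s2, and ¬(s3 → s2), then s3 ≺ s1 or s1 → s3. -/
/-- For a finite poset `(S, r)` with a linear extension `lt`,
conditions (P2r) and (P2l) are equivalent. -/
theorem stmt_1 {S : Type*} [Fintype S]
    (r : S → S → Prop)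
    (hrTrans : ∀ a b c, r a b → r b c → r a c)
    (hrIrrefl : ∀ a, ¬ r a a)
    (lt : S → S → Prop)
    (hltTrans : ∀ a b c, lt a b → lt b c → lt a c)
    (hltIrrefl : ∀ a, ¬ lt a a)
    (hltTotal : ∀ a b, a ≠ b → lt a b ∨ lt b a)
    (hext : ∀ a b, a ≠ b → r a b → lt a b) :
    (∀ s1 s2 s3, s1 ≠ s2 → s1 ≠ s3 → s2 ≠ s3 →
        r s1 s2 → lt s1 s3 → ¬ r s1 s3 → lt s2 s3 ∨ r s3 s2) ↔
    (∀ s1 s2 s3, s1 ≠ s2 → s1 ≠ s3 → s2 ≠ s3 →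
        r s1 s2 → lt s3 s2 → ¬ r s3 s2 → lt s3 s1 ∨ r s1 s3) := by
  constructor
  · intro h s1 s2 s3 h12 h13 h23 hr12 hlt32 hnr32
    by_contra hc
    push_neg at hc
    obtain ⟨hnlt31, hnr13⟩ := hc
    have hlt13 : lt s1 s3 := (hltTotal s1 s3 h13).resolve_right hnlt31
    rcases h s1 s2 s3 h12 h13 h23 hr12 hlt13 hnr13 with h' | h'
    · exact hltIrrefl s2 (hltTrans _ _ _ h' hlt32)
    · exact hnr32 h'
  · intro h s1 s2 s3 h12 h13 h23 hr12 hlt13 hnr13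
    by_contra hc
    push_neg at hc
    obtain ⟨hnlt23, hnr32⟩ := hc
    have hlt32 : lt s3 s2 := (hltTotal s2 s3 h23).resolve_left hnlt23
    rcases h s1 s2 s3 h12 h13 h23 hr12 hlt32 hnr32 with h' | h'
    · exact hltIrrefl s1 (hltTrans _ _ _ hlt13 h')
    · exact hnr13 h'
end

section
/- Let (S, →, ≺) be a planar set. If e1 → e, e2 → e, e1 ≺ e' ≺ e2, and ¬(e1 → e'), then e' → e. -/
theorem lt_of_lt_of_rel {S : Type*} {r lt : S → S → Prop}
    (hltTrans : ∀ a b c, lt a b → lt b c → lt a c)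
    (hext : ∀ a b, a ≠ b → r a b → lt a b) {a b c : S}
    (hab : lt a b) (hbc : r b c) : lt a c := by
  by_cases hb : b = c
  · exact hb ▸ hab
  · exact hltTrans a b c hab (hext b c hb hbc)

theorem stmt_3_general {S : Type*}
    (r : S → S → Prop)
    (lt : S → S → Prop)
    (hltTrans : ∀ a b c, lt a b → lt b c → lt a c)
    (hltIrrefl : ∀ a, ¬ lt a a)
    (hext : ∀ a b, a ≠ b → r a b → lt a b)
    (hP2 : ∀ s1 s2 s3, s1 ≠ s2 → s1 ≠ s3 → s2 ≠ s3 →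
        r s1 s2 → lt s1 s3 → lt s3 s2 → r s3 s2 ∨ r s1 s3)
    (e e' e1 e2 : S)
    (h1 : r e1 e) (h2 : r e2 e)
    (h3 : lt e1 e') (h4 : lt e' e2)
    (h5 : ¬ r e1 e') :
    r e' e := by
  have hne {a b : S} (h : lt a b) : a ≠ b := by
    rintro rfl
    exact hltIrrefl a h
  have he'e : lt e' e := lt_of_lt_of_rel hltTrans hext h4 h2
  have he1e : lt e1 e := hltTrans _ _ _ h3 he'e
  exact (hP2 e1 e e' (hne he1e) (hne h3) (hne he'e).symm h1 h3 he'e).resolve_right h5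

/-- Lemma A for planar sets: if `e1 → e`, `e2 → e`,
`e1 ≺ e' ≺ e2` and `¬(e1 → e')`, then `e' → e`. -/
theorem stmt_3 {S : Type*} [Fintype S]
    (r : S → S → Prop)
    (hrTrans : ∀ a b c, r a b → r b c → r a c)
    (hrIrrefl : ∀ a, ¬ r a a)
    (lt : S → S → Prop)
    (hltTrans : ∀ a b c, lt a b → lt b c → lt a c)
    (hltIrrefl : ∀ a, ¬ lt a a)
    (hltTotal : ∀ a b, a ≠ b → lt a b ∨ lt b a)
    (hext : ∀ a b, a ≠ b → r a b → lt a b)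
    (hP2 : ∀ s1 s2 s3, s1 ≠ s2 → s1 ≠ s3 → s2 ≠ s3 →
        r s1 s2 → lt s1 s3 → lt s3 s2 → r s3 s2 ∨ r s1 s3)
    (e e' e1 e2 : S)
    (h1 : r e1 e) (h2 : r e2 e)
    (h3 : lt e1 e') (h4 : lt e' e2)
    (h5 : ¬ r e1 e') :
    r e' e :=
  stmt_3_general r lt hltTrans hltIrrefl hext hP2 e e' e1 e2 h1 h2 h3 h4 h5
end

section
/- Let (S, →, ≺) be a planar set. If e → e1, e → e2, e1 ≺ e' ≺ e2, and ¬(e' → e2), then e → e'. -/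
/-- Lemma B for planar sets: if `e → e1`, `e → e2`,
`e1 ≺ e' ≺ e2` and `¬(e' → e2)`, then `e → e'`. -/
theorem stmt_4 {S : Type*} [Fintype S]
    (r : S → S → Prop)
    (hrTrans : ∀ a b c, r a b → r b c → r a c)
    (hrIrrefl : ∀ a, ¬ r a a)
    (lt : S → S → Prop)
    (hltTrans : ∀ a b c, lt a b → lt b c → lt a c)
    (hltIrrefl : ∀ a, ¬ lt a a)
    (hltTotal : ∀ a b, a ≠ b → lt a b ∨ lt b a)
    (hext : ∀ a b, a ≠ b → r a b → lt a b)
    (hP2 : ∀ s1 s2 s3, s1 ≠ s2 → s1 ≠ s3 → s2 ≠ s3 →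
        r s1 s2 → lt s1 s3 → lt s3 s2 → r s3 s2 ∨ r s1 s3)
    (e e' e1 e2 : S)
    (h1 : r e e1) (h2 : r e e2)
    (h3 : lt e1 e') (h4 : lt e' e2)
    (h5 : ¬ r e' e2) :
    r e e' := by
  have hee1 : e ≠ e1 := fun h => hrIrrefl e (h ▸ h1)
  have hlee' : lt e e' := hltTrans _ _ _ (hext _ _ hee1 h1) h3
  have hee2 : e ≠ e2 := fun h => hrIrrefl e (h ▸ h2)
  have hee' : e ≠ e' := fun h => hltIrrefl e (h ▸ hlee')
  have he'e2 : e' ≠ e2 := fun h => hltIrrefl e' (h ▸ h4)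
  rcases hP2 e e2 e' hee2 hee' he'e2.symm h2 hlee' h4 with h | h
  · exact absurd h h5
  · exact h
end

section
/- Let (Γ, ≺) be a progressive planar graph, i.e., a finite directed acyclic graph whose edge set E carries a linear order ≺ such that (P1) e1 → e2 (there is a directed path from e1 to e2) implies e1 ≺ e2, and (P2) e1 → e2 and e1 ≺ e3 ≺ e2 imply e3 → e2 or e1 → e3. Define on real vertices v1 ≺_V v2 iff v1 → v2 (directed path) or o_max(v1) ≺ i_min(v2), where o_max(v) is the ≺-largest output edge of v and i_min(v) the ≺-smallest input edge of v. Then ≺_V is irreflexive and asymmetric: it is impossible that both v1 ≺_V v2 and v2 ≺_V v1. -/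
/-- The vertex order induced by a planar structure on a progressive planar graph:
`v ≺_V w` iff `v → w` (directed path of vertices) or `o_max(v) ≺ i_min(w)`. -/
def vertexOrder {V E : Type*} (rv : V → V → Prop) (lt : E → E → Prop)
    (imin omax : V → E) (v w : V) : Prop :=
  rv v w ∨ lt (omax v) (imin w)

/-- the vertex order `≺_V` is asymmetric (hence irreflexive):
it is impossible that both `v1 ≺_V v2` and `v2 ≺_V v1`. -/
theorem stmt_6 {V E : Type*} [Fintype V] [Fintype E]
    (re : E → E → Prop) (lt : E → E → Prop) (rv : V → V → Prop)
    (imin omax : V → E)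
    (hreTrans : ∀ a b c, re a b → re b c → re a c)
    (hreIrrefl : ∀ a, ¬ re a a)
    (hltTrans : ∀ a b c, lt a b → lt b c → lt a c)
    (hltIrrefl : ∀ a, ¬ lt a a)
    (hltTotal : ∀ a b, a ≠ b → lt a b ∨ lt b a)
    (hP1 : ∀ a b, re a b → lt a b)
    (hP2 : ∀ e1 e2 e3, re e1 e2 → lt e1 e3 → lt e3 e2 → re e3 e2 ∨ re e1 e3)
    (hrvTrans : ∀ a b c, rv a b → rv b c → rv a c)
    (hrvIrrefl : ∀ a, ¬ rv a a)
    (hio : ∀ v, re (imin v) (omax v))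
    (hrv_re : ∀ v w, rv v w → re (imin v) (omax w))
    (himim : ∀ v w, v ≠ w → re (imin v) (imin w) → rv v w)
    (himom : ∀ v w, v ≠ w → re (imin v) (omax w) → rv v w)
    (homom : ∀ v w, v ≠ w → re (omax v) (omax w) → rv v w) :
    ∀ v1 v2 : V, ¬ (vertexOrder rv lt imin omax v1 v2 ∧
      vertexOrder rv lt imin omax v2 v1) := by
  rintro v1 v2 ⟨h12 | h12, h21 | h21⟩
  · exact hrvIrrefl v1 (hrvTrans _ _ _ h12 h21)
  · exact hltIrrefl _ (hltTrans _ _ _ h21 (hP1 _ _ (hrv_re _ _ h12)))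
  · exact hltIrrefl _ (hltTrans _ _ _ h12 (hP1 _ _ (hrv_re _ _ h21)))
  · exact hltIrrefl _ (hltTrans _ _ _ (hltTrans _ _ _ (hP1 _ _ (hio v1)) h12)
      (hltTrans _ _ _ (hP1 _ _ (hio v2)) h21))
end

section
/- With the notation of the vertex order on a progressive planar graph (v1 ≺_V v2 iff v1 → v2 or o_max(v1) ≺ i_min(v2)), the relation ≺_V is transitive: if v1 ≺_V v2 and v2 ≺_V v3 then v1 ≺_V v3. -/
/-- the vertex order `≺_V` is transitive. -/
theorem stmt_7 {V E : Type*} [Fintype V] [Fintype E]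
    (re : E → E → Prop) (lt : E → E → Prop) (rv : V → V → Prop)
    (imin omax : V → E)
    (hreTrans : ∀ a b c, re a b → re b c → re a c)
    (hreIrrefl : ∀ a, ¬ re a a)
    (hltTrans : ∀ a b c, lt a b → lt b c → lt a c)
    (hltIrrefl : ∀ a, ¬ lt a a)
    (hltTotal : ∀ a b, a ≠ b → lt a b ∨ lt b a)
    (hP1 : ∀ a b, re a b → lt a b)
    (hP2 : ∀ e1 e2 e3, re e1 e2 → lt e1 e3 → lt e3 e2 → re e3 e2 ∨ re e1 e3)
    (hrvTrans : ∀ a b c, rv a b → rv b c → rv a c)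
    (hrvIrrefl : ∀ a, ¬ rv a a)
    (hio : ∀ v, re (imin v) (omax v))
    (hrv_re : ∀ v w, rv v w → re (imin v) (omax w))
    (himim : ∀ v w, v ≠ w → re (imin v) (imin w) → rv v w)
    (himom : ∀ v w, v ≠ w → re (imin v) (omax w) → rv v w)
    (homom : ∀ v w, v ≠ w → re (omax v) (omax w) → rv v w) :
    ∀ v1 v2 v3 : V, vertexOrder rv lt imin omax v1 v2 →
      vertexOrder rv lt imin omax v2 v3 → vertexOrder rv lt imin omax v1 v3 := by
  intro v1 v2 v3 h12 h23
  rcases h12 with h12 | h12 <;> rcases h23 with h23 | h23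
  · exact Or.inl (hrvTrans _ _ _ h12 h23)
  · -- rv v1 v2, lt (omax v2) (imin v3)
    have hlt12 : lt (imin v1) (omax v2) := hP1 _ _ (hrv_re _ _ h12)
    have hne13 : v1 ≠ v3 := by
      rintro rfl
      exact hltIrrefl _ (hltTrans _ _ _ hlt12 h23)
    by_cases hlt : lt (omax v1) (imin v3)
    · exact Or.inr hlt
    · rcases eq_or_ne (omax v1) (imin v3) with heq | hne
      · have : re (omax v1) (omax v3) := heq ▸ hio v3
        exact Or.inl (homom _ _ hne13 this)
      · have h31 : lt (imin v3) (omax v1) := (hltTotal _ _ (Ne.symm hne)).resolve_right hlt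
        have h13 : lt (imin v1) (imin v3) := hltTrans _ _ _ hlt12 h23
        rcases hP2 _ _ _ (hio v1) h13 h31 with h | h
        · -- re (imin v3) (omax v1) : v3 before v1, contradiction
          have hrv31 : rv v3 v1 := himom _ _ (Ne.symm hne13) h
          have : rv v3 v2 := hrvTrans _ _ _ hrv31 h12
          exact absurd (hltTrans _ _ _ (hP1 _ _ (hrv_re _ _ this)) h23) (hltIrrefl _)
        · exact Or.inl (himim _ _ hne13 h)
  · -- lt (omax v1) (imin v2), rv v2 v3
    have hlt23 : lt (imin v2) (omax v3) := hP1 _ _ (hrv_re _ _ h23)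
    have hne13 : v1 ≠ v3 := by
      rintro rfl
      exact hltIrrefl _ (hltTrans _ _ _ h12 hlt23)
    by_cases hlt : lt (omax v1) (imin v3)
    · exact Or.inr hlt
    · rcases eq_or_ne (omax v1) (imin v3) with heq | hne
      · have : re (omax v1) (omax v3) := heq ▸ hio v3
        exact Or.inl (homom _ _ hne13 this)
      · have h31 : lt (imin v3) (omax v1) := (hltTotal _ _ (Ne.symm hne)).resolve_right hlt
        have h13 : lt (omax v1) (omax v3) := hltTrans _ _ _ h12 hlt23
        rcases hP2 _ _ _ (hio v3) h31 h13 with h | h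
        · exact Or.inl (homom _ _ hne13 h)
        · have hrv31 : rv v3 v1 := himom _ _ (Ne.symm hne13) h
          have : rv v2 v1 := hrvTrans _ _ _ h23 hrv31
          exact absurd (hltTrans _ _ _ h12 (hP1 _ _ (hrv_re _ _ this))) (hltIrrefl _)
  · exact Or.inr (hltTrans _ _ _ (hltTrans _ _ _ h12 (hP1 _ _ (hio v2))) h23)
end

section
/- The linear order ≺_V on the vertices of a progressive planar graph satisfies the planarity condition (P2): for any three distinct vertices v1, v2, v3, if v1 → v2 and v1 ≺_V v3 ≺_V v2, then v1 → v3 or v3 → v2. -/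
/-- the vertex order `≺_V` satisfies the planarity condition (P2):
for distinct vertices, `v1 → v2` and `v1 ≺_V v3 ≺_V v2` imply
`v1 → v3` or `v3 → v2`. -/
theorem stmt_9 {V E : Type*} [Fintype V] [Fintype E]
    (re : E → E → Prop) (lt : E → E → Prop) (rv : V → V → Prop)
    (imin omax : V → E)
    (hreTrans : ∀ a b c, re a b → re b c → re a c)
    (hreIrrefl : ∀ a, ¬ re a a)
    (hltTrans : ∀ a b c, lt a b → lt b c → lt a c)
    (hltIrrefl : ∀ a, ¬ lt a a)
    (hltTotal : ∀ a b, a ≠ b → lt a b ∨ lt b a)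
    (hP1 : ∀ a b, re a b → lt a b)
    (hP2 : ∀ e1 e2 e3, re e1 e2 → lt e1 e3 → lt e3 e2 → re e3 e2 ∨ re e1 e3)
    (hrvTrans : ∀ a b c, rv a b → rv b c → rv a c)
    (hrvIrrefl : ∀ a, ¬ rv a a)
    (hio : ∀ v, re (imin v) (omax v))
    (hrv_re : ∀ v w, rv v w → re (imin v) (omax w))
    (himim : ∀ v w, v ≠ w → re (imin v) (imin w) → rv v w)
    (himom : ∀ v w, v ≠ w → re (imin v) (omax w) → rv v w)
    (homom : ∀ v w, v ≠ w → re (omax v) (omax w) → rv v w) :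
    ∀ v1 v2 v3 : V, v1 ≠ v2 → v1 ≠ v3 → v2 ≠ v3 → rv v1 v2 →
      vertexOrder rv lt imin omax v1 v3 → vertexOrder rv lt imin omax v3 v2 →
      rv v1 v3 ∨ rv v3 v2 := by
  intro v1 v2 v3 h12 h13 h23 hrv12 ho13 ho32
  rcases ho13 with h | h1
  · exact Or.inl h
  rcases ho32 with h | h2
  · exact Or.inr h
  have ha : lt (imin v1) (imin v3) := hltTrans _ _ _ (hP1 _ _ (hio v1)) h1
  have hb : lt (imin v3) (omax v2) :=
    hltTrans _ _ _ (hP1 _ _ (hio v3)) (hltTrans _ _ _ h2 (hP1 _ _ (hio v2)))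
  rcases hP2 _ _ _ (hrv_re _ _ hrv12) ha hb with h | h
  · exact Or.inr (himom _ _ (Ne.symm h23) h)
  · exact Or.inl (himim _ _ h13 h)
end

section
/- In a planar graph (Γ, ≺) with linearly ordered outputs o1 ≺ ... ≺ on (output edges are edges e with ¬∃e', e → e'), the first basic segment satisfies: {e ∈ E(Γ) : e ≺ o1} = {e ∈ E(Γ) : e ≠ o1 and e → o1}. -/
/-- in a progressive planar graph with `o1` the `≺`-least output
edge, the first basic segment satisfies
`{e : e ≺ o1} = {e : e ≠ o1 ∧ e → o1}`. -/
theorem stmt_12 {E : Type*} [Fintype E]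
    (re lt : E → E → Prop)
    (hreTrans : ∀ a b c, re a b → re b c → re a c)
    (hreIrrefl : ∀ a, ¬ re a a)
    (hltTrans : ∀ a b c, lt a b → lt b c → lt a c)
    (hltIrrefl : ∀ a, ¬ lt a a)
    (hltTotal : ∀ a b, a ≠ b → lt a b ∨ lt b a)
    (hP1 : ∀ a b, re a b → lt a b)
    (hP2 : ∀ a b c, re a b → lt a c → lt c b → re c b ∨ re a c)
    (hreach : ∀ e, (¬ ∃ f, re e f) ∨ ∃ o, (¬ ∃ f, re o f) ∧ re e o)
    (o1 : E)
    (ho1 : ¬ ∃ f, re o1 f)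
    (ho1min : ∀ o, (¬ ∃ f, re o f) → o ≠ o1 → lt o1 o) :
    ∀ e, lt e o1 ↔ (e ≠ o1 ∧ re e o1) := by
  intro e
  constructor
  · intro hlt
    have hne : e ≠ o1 := by rintro rfl; exact hltIrrefl e hlt
    refine ⟨hne, ?_⟩
    rcases hreach e with hout | ⟨o, ho, heo⟩
    · have := ho1min e hout hne
      exact absurd (hltTrans _ _ _ hlt this) (hltIrrefl e)
    · by_cases hoo : o = o1
      · exact hoo ▸ heo
      · have hlo : lt o1 o := ho1min o ho hoo
        rcases hP2 e o o1 heo hlt hlo with h | h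
        · exact absurd ⟨o, h⟩ ho1
        · exact h
  · rintro ⟨-, h⟩
    exact hP1 _ _ h
end

section
/- In a planar graph (Γ, ≺) with linearly ordered outputs o1 ≺ ... ≺ on, for 2 ≤ k ≤ n the k-th basic segment satisfies: {e : o_{k-1} ≺ e ≺ o_k} = {e : e → o_k and ¬(e → o_{k-1})}. -/
/-- in a progressive planar graph, for consecutive output edges
`oprev ≺ ok` (no output strictly between them), the basic segment satisfies
`{e : oprev ≺ e ≺ ok} = {e : e → ok ∧ ¬(e → oprev)}`. -/
theorem stmt_13 {E : Type*} [Fintype E]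
    (re lt : E → E → Prop)
    (hreTrans : ∀ a b c, re a b → re b c → re a c)
    (hreIrrefl : ∀ a, ¬ re a a)
    (hltTrans : ∀ a b c, lt a b → lt b c → lt a c)
    (hltIrrefl : ∀ a, ¬ lt a a)
    (hltTotal : ∀ a b, a ≠ b → lt a b ∨ lt b a)
    (hP1 : ∀ a b, re a b → lt a b)
    (hP2 : ∀ a b c, re a b → lt a c → lt c b → re c b ∨ re a c)
    (hreach : ∀ e, (¬ ∃ f, re e f) ∨ ∃ o, (¬ ∃ f, re o f) ∧ re e o)
    (oprev ok : E)
    (hoprev : ¬ ∃ f, re oprev f)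
    (hok : ¬ ∃ f, re ok f)
    (hlt : lt oprev ok)
    (hcons : ∀ o, (¬ ∃ f, re o f) → ¬ (lt oprev o ∧ lt o ok)) :
    ∀ e, (lt oprev e ∧ lt e ok) ↔ (re e ok ∧ ¬ re e oprev) := by
  intro e
  constructor
  · rintro ⟨h1, h2⟩
    -- e is not an output (it would be strictly between), so it reaches some output o
    rcases hreach e with hout | ⟨o, ho, heo⟩
    · exact absurd (hcons e hout) (fun h => h ⟨h1, h2⟩)
    · have hlo : lt e o := hP1 _ _ heo
      have hpo : lt oprev o := hltTrans _ _ _ h1 hlo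
      have hok' : ¬ lt o ok := fun h => hcons o ho ⟨hpo, h⟩
      by_cases hoe : o = ok
      · subst hoe
        refine ⟨heo, fun hre => ?_⟩
        exact hltIrrefl _ (hltTrans _ _ _ h1 (hP1 _ _ hre))
      · have : lt ok o := by
          rcases hltTotal o ok hoe with h | h
          · exact absurd h hok'
          · exact h
        rcases hP2 e o ok heo h2 this with h | h
        · exact absurd ⟨o, h⟩ hok
        · exact ⟨h, fun hre => hltIrrefl _ (hltTrans _ _ _ h1 (hP1 _ _ hre))⟩
  · rintro ⟨h1, h2⟩
    have h3 : lt e ok := hP1 _ _ h1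
    refine ⟨?_, h3⟩
    by_cases he : e = oprev
    · subst he; exact absurd ⟨ok, h1⟩ hoprev
    · rcases hltTotal oprev e (fun h => he h.symm) with h | h
      · exact h
      · rcases hP2 e ok oprev h1 h hlt with hh | hh
        · exact absurd ⟨ok, hh⟩ hoprev
        · exact absurd hh h2
end

section
/- In a planar graph (Γ, ≺) with linearly ordered inputs i1 ≺ ... ≺ in (input edges are edges e with ¬∃e', e' → e), for 1 ≤ k ≤ n−1 the segments satisfy: {e : i_k ≺ e ≺ i_{k+1}} = {e : i_k → e and ¬(i_{k+1} → e)}, and {e : i_n ≺ e} = {e : i_n → e}. -/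
/-- in a progressive planar graph, for consecutive input edges
`ik ≺ iknext` one has `{e : ik ≺ e ≺ iknext} = {e : ik → e ∧ ¬(iknext → e)}`,
and for the `≺`-greatest input edge `iN` one has `{e : iN ≺ e} = {e : iN → e}`. -/
theorem stmt_14 {E : Type*} [Fintype E]
    (re lt : E → E → Prop)
    (hreTrans : ∀ a b c, re a b → re b c → re a c)
    (hreIrrefl : ∀ a, ¬ re a a)
    (hltTrans : ∀ a b c, lt a b → lt b c → lt a c)
    (hltIrrefl : ∀ a, ¬ lt a a)
    (hltTotal : ∀ a b, a ≠ b → lt a b ∨ lt b a)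
    (hP1 : ∀ a b, re a b → lt a b)
    (hP2 : ∀ a b c, re a b → lt a c → lt c b → re c b ∨ re a c)
    (hreach : ∀ e, (¬ ∃ f, re f e) ∨ ∃ i, (¬ ∃ f, re f i) ∧ re i e)
    (ik iknext iN : E)
    (hik : ¬ ∃ f, re f ik)
    (hiknext : ¬ ∃ f, re f iknext)
    (hlt : lt ik iknext)
    (hcons : ∀ i, (¬ ∃ f, re f i) → ¬ (lt ik i ∧ lt i iknext))
    (hiN : ¬ ∃ f, re f iN)
    (hiNmax : ∀ i, (¬ ∃ f, re f i) → i ≠ iN → lt i iN) :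
    (∀ e, (lt ik e ∧ lt e iknext) ↔ (re ik e ∧ ¬ re iknext e)) ∧
    (∀ e, lt iN e ↔ re iN e) := by
  constructor
  · intro e
    constructor
    · rintro ⟨h1, h2⟩
      have hne : ¬ re iknext e := fun h => hltIrrefl e (hltTrans _ _ _ h2 (hP1 _ _ h))
      refine ⟨?_, hne⟩
      rcases hreach e with hinp | ⟨i, hi, hie⟩
      · exact absurd ⟨h1, h2⟩ (hcons e hinp)
      · by_cases hik' : i = ik
        · exact hik' ▸ hie
        rcases hltTotal i ik hik' with hlt1 | hlt2
        · rcases hP2 i e ik hie hlt1 h1 with h | h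
          · exact h
          · exact absurd ⟨i, h⟩ hik
        · exfalso
          by_cases hnx : i = iknext
          · exact hne (hnx ▸ hie)
          rcases hltTotal i iknext hnx with hlt3 | hlt4
          · exact hcons i hi ⟨hlt2, hlt3⟩
          · exact hltIrrefl e (hltTrans _ _ _ (hltTrans _ _ _ h2 hlt4) (hP1 _ _ hie))
    · rintro ⟨h1, h2⟩
      refine ⟨hP1 _ _ h1, ?_⟩
      by_cases hne : e = iknext
      · exact absurd ⟨ik, hne ▸ h1⟩ hiknext
      rcases hltTotal e iknext hne with h | h
      · exact h
      · rcases hP2 ik e iknext h1 hlt h with h' | h'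
        · exact absurd h' h2
        · exact absurd ⟨ik, h'⟩ hiknext
  · intro e
    constructor
    · intro h
      rcases hreach e with hinp | ⟨i, hi, hie⟩
      · exfalso
        by_cases hne : e = iN
        · exact hltIrrefl e (hne ▸ h)
        · exact hltIrrefl e (hltTrans _ _ _ (hiNmax e hinp hne) h)
      · by_cases hne : i = iN
        · exact hne ▸ hie
        rcases hP2 i e iN hie (hiNmax i hi hne) h with h' | h'
        · exact h'
        · exact absurd ⟨i, h'⟩ hiN
    · exact hP1 _ _
end

section
/- In a planar set (S, →, ≺), let e be an element with e → o_min(e), where o_min(e) is the ≺-least element of {o : e → o, o →-maximal}; then for every →-maximal element o with e ≺ o one has o_min(e) ⪯ o. -/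
/-- abstract Lemma B'': in a planar set, if `omin` is the
`≺`-least `→`-maximal element above `e`, and `ok` is a `→`-maximal element with
`e ≺ ok`, then `omin ⪯ ok`. -/
theorem stmt_15 {S : Type*} [Fintype S]
    (r : S → S → Prop)
    (hrTrans : ∀ a b c, r a b → r b c → r a c)
    (hrIrrefl : ∀ a, ¬ r a a)
    (lt : S → S → Prop)
    (hltTrans : ∀ a b c, lt a b → lt b c → lt a c)
    (hltIrrefl : ∀ a, ¬ lt a a)
    (hltTotal : ∀ a b, a ≠ b → lt a b ∨ lt b a)
    (hext : ∀ a b, a ≠ b → r a b → lt a b)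
    (hP2 : ∀ s1 s2 s3, s1 ≠ s2 → s1 ≠ s3 → s2 ≠ s3 →
        r s1 s2 → lt s1 s3 → lt s3 s2 → r s3 s2 ∨ r s1 s3)
    (hreach : ∀ s, (¬ ∃ x, r s x) ∨ ∃ m, (¬ ∃ x, r m x) ∧ r s m)
    (e ok omin : S)
    (hokMax : ¬ ∃ x, r ok x)
    (heok : lt e ok)
    (hominMax : ¬ ∃ x, r omin x)
    (hreomin : r e omin)
    (hominLeast : ∀ m, (¬ ∃ x, r m x) → r e m → omin = m ∨ lt omin m) :
    omin = ok ∨ lt omin ok := by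
  by_cases h : omin = ok
  · exact Or.inl h
  rcases hltTotal omin ok h with h1 | h1
  · exact Or.inr h1
  -- lt ok omin
  have heomin : e ≠ omin := fun he => hrIrrefl omin (he ▸ hreomin)
  have heok : e ≠ ok := fun he => hltIrrefl ok (he ▸ ‹lt e ok›)
  have hokomin : ok ≠ omin := fun he => h he.symm
  rcases hP2 e omin ok heomin heok h hreomin ‹lt e ok› h1 with h2 | h2
  · exact absurd ⟨omin, h2⟩ hokMax
  · rcases hominLeast ok hokMax h2 with h3 | h3
    · exact Or.inl h3
    · exact absurd (hltTrans _ _ _ h3 h1) (hltIrrefl omin)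
end
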